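/- Let (Ω, ℱ, μ) be a probability space, E ∈ ℱ with μ(E) = p ∈ (0,1), and let κ be a Markov kernel from Ω to a measurable space 𝒴. Let P = (μ(·|E)) ★ κ and Q = μ ★ κ. Then the Jensen–Shannon divergence satisfies D_JS(P ‖ Q) ≤ (1/2)·log( 4·p^p / (1+p)^{1+p} ). -/

import Mathlib

open MeasureTheory ProbabilityTheory Set

/-- The Jensen–Shannon generator `f_JS(t) = (1/2)(t log t − (t+1) log((t+1)/2))`.
(Note that with `Real.log`, `f_JS 0 = (1/2) log 2`, as required.) -/
noncomputable def fJS (t : ℝ) : ℝ :=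
  (1 / 2 : ℝ) * (t * Real.log t - (t + 1) * Real.log ((t + 1) / 2))

/-- The Jensen–Shannon divergence as the f-divergence `∫ f_JS(dP/dQ) dQ` (for `P ≪ Q`). -/
noncomputable def jsDivergence {𝒴 : Type*} [MeasurableSpace 𝒴] (P Q : Measure 𝒴) : ℝ :=
  ∫ y, fJS ((P.rnDeriv Q y).toReal) ∂Q

/-- Alternative form of the JS generator avoiding division inside the logarithm. -/
lemma fJS_eq (t : ℝ) : fJS t =
    (1/2 : ℝ) * (t * Real.log t - (t+1) * Real.log (t+1) + (t+1) * Real.log 2) := by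
  unfold fJS
  rcases eq_or_ne (t + 1) 0 with h | h
  · rw [h]; norm_num
  · rw [Real.log_div h (by norm_num)]; ring

lemma continuous_fJS : Continuous fJS := by
  have : Continuous fun t : ℝ =>
      (1/2 : ℝ) * (t * Real.log t - (t+1) * Real.log (t+1) + (t+1) * Real.log 2) := by
    fun_prop
  simpa only [← fJS_eq] using this

lemma hasDerivAt_fJS {t : ℝ} (ht : 0 < t) :
    HasDerivAt fJS ((1/2 : ℝ) * (Real.log t - Real.log (t+1) + Real.log 2)) t := by
  have h1 : HasDerivAt (fun x : ℝ => x * Real.log x) (Real.log t + 1) t :=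
    Real.hasDerivAt_mul_log ht.ne'
  have h2 : HasDerivAt (fun x : ℝ => (x+1) * Real.log (x+1)) (Real.log (t+1) + 1) t := by
    have := (Real.hasDerivAt_mul_log (x := t + 1) (by positivity)).comp t
      ((hasDerivAt_id t).add_const 1)
    simpa [Function.comp_def] using this
  have h3 : HasDerivAt (fun x : ℝ => (x+1) * Real.log 2) (Real.log 2) t := by
    simpa using ((hasDerivAt_id t).add_const 1).mul_const (Real.log 2)
  have h := (((h1.sub h2).add h3).const_mul (1/2 : ℝ))
  have heq : ∀ x : ℝ, (1/2 : ℝ) * (x * Real.log x - (x+1) * Real.log (x+1) + (x+1) * Real.log 2)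
      = fJS x := fun x => (fJS_eq x).symm
  have h' : HasDerivAt
      (fun y : ℝ => (1/2 : ℝ) * (y * Real.log y - (y+1) * Real.log (y+1) + (y+1) * Real.log 2))
      ((1/2 : ℝ) * (Real.log t - Real.log (t+1) + Real.log 2)) t := by
    rw [show (1/2 : ℝ) * (Real.log t - Real.log (t+1) + Real.log 2)
        = 1/2 * (Real.log t + 1 - (Real.log (t+1) + 1) + Real.log 2) by ring]
    exact h
  simpa only [heq] using h'

lemma convexOn_fJS : ConvexOn ℝ (Ici 0) fJS := by
  have hderiv : ∀ x ∈ interior (Ici (0:ℝ)), deriv fJS x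
      = (1/2 : ℝ) * (Real.log x - Real.log (x+1) + Real.log 2) := by
    intro x hx
    rw [interior_Ici] at hx
    exact (hasDerivAt_fJS hx).deriv
  refine MonotoneOn.convexOn_of_deriv (convex_Ici 0) continuous_fJS.continuousOn ?_ ?_
  · intro x hx
    rw [interior_Ici] at hx
    exact (hasDerivAt_fJS hx).differentiableAt.differentiableWithinAt
  · intro x hx y hy hxy
    rw [hderiv x hx, hderiv y hy]
    rw [interior_Ici] at hx hy
    have hx' : (0:ℝ) < x := hx
    have hy' : (0:ℝ) < y := hy
    have hlog : Real.log x - Real.log (x+1) ≤ Real.log y - Real.log (y+1) := by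
      rw [← Real.log_div hx'.ne' (by positivity), ← Real.log_div hy'.ne' (by positivity)]
      apply Real.log_le_log (by positivity)
      rw [div_le_div_iff₀ (by positivity) (by positivity)]
      nlinarith
    linarith

/-- Chord (secant line) bound for the convex function `fJS` on `[0, p⁻¹]`. -/
lemma fJS_chord {p t : ℝ} (hp0 : 0 < p) (ht : t ∈ Icc (0:ℝ) p⁻¹) :
    fJS t ≤ fJS 0 + (p * (fJS p⁻¹ - fJS 0)) * t := by
  obtain ⟨ht0, htp⟩ := ht
  have hpt0 : 0 ≤ p * t := by positivity
  have hpt1 : p * t ≤ 1 := by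
    calc p * t ≤ p * p⁻¹ := by nlinarith
      _ = 1 := mul_inv_cancel₀ hp0.ne'
  have h := convexOn_fJS.2 (Set.mem_Ici.mpr (le_refl (0:ℝ)))
    (Set.mem_Ici.mpr (by positivity : (0:ℝ) ≤ p⁻¹))
    (show (0:ℝ) ≤ 1 - p * t by linarith) hpt0
    (show (1 - p * t) + p * t = 1 by ring)
  have harg : (1 - p * t) • (0:ℝ) + (p * t) • p⁻¹ = t := by
    simp only [smul_eq_mul, mul_zero, zero_add]
    field_simp
  rw [harg] at h
  calc fJS t ≤ (1 - p * t) * fJS 0 + (p * t) * fJS p⁻¹ := h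
    _ = fJS 0 + (p * (fJS p⁻¹ - fJS 0)) * t := by ring

/-- Final algebraic identity for the bound. -/
lemma key_algebra {p : ℝ} (hp0 : 0 < p) (hp1 : p < 1) :
    (1 - p) * fJS 0 + p * fJS p⁻¹
      = (1/2 : ℝ) * Real.log (4 * p ^ p / (1+p) ^ (1+p)) := by
  have h1p : (0:ℝ) < 1 + p := by linarith
  have hA : fJS 0 = 1/2 * Real.log 2 := by
    norm_num [fJS]
    rw [show (1:ℝ)/2 = 2⁻¹ by norm_num, Real.log_inv]
    ring
  have hinv : p⁻¹ + 1 = (1+p)/p := by field_simp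
  have hB : fJS p⁻¹ = 1/2 * (p⁻¹ * (-Real.log p)
      - ((1+p)/p) * (Real.log (1+p) - Real.log p) + ((1+p)/p) * Real.log 2) := by
    rw [fJS_eq, Real.log_inv, hinv, Real.log_div h1p.ne' hp0.ne']
  have hRHS : Real.log (4 * p ^ p / (1+p) ^ (1+p))
      = 2*Real.log 2 + p * Real.log p - (1+p) * Real.log (1+p) := by
    rw [Real.log_div (by positivity) (by positivity),
      Real.log_mul (by norm_num) (by positivity),
      Real.log_rpow hp0, Real.log_rpow h1p, show (4:ℝ) = 2^2 by norm_num, Real.log_pow]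
    push_cast; ring
  rw [hA, hB, hRHS]
  field_simp
  ring

/-- **Jensen–Shannon bound.** Let `μ` be a probability measure, `E` an
event with `μ(E) = p ∈ (0,1)`, and `κ` a Markov kernel into `𝒴`. Let `P = μ(·|E) ★ κ`
and `Q = μ ★ κ`. Then the Jensen–Shannon divergence satisfies
`D_JS(P ‖ Q) ≤ (1/2)·log(4·p^p/(1+p)^(1+p))`. -/
theorem jsDivergence_bind_le
    {Ω 𝒴 : Type*} [MeasurableSpace Ω] [MeasurableSpace 𝒴]
    (μ : Measure Ω) [IsProbabilityMeasure μ]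
    (E : Set Ω) (hE : MeasurableSet E) (p : ℝ) (hp : p ∈ Set.Ioo (0:ℝ) 1)
    (hpE : μ E = ENNReal.ofReal p)
    (κ : ProbabilityTheory.Kernel Ω 𝒴) [ProbabilityTheory.IsMarkovKernel κ] :
    jsDivergence ((μ[|E]).bind κ) (μ.bind κ) ≤
      (1 / 2 : ℝ) * Real.log (4 * p ^ p / (1 + p) ^ (1 + p)) := by
  obtain ⟨hp0, hp1⟩ := hp
  have hE0 : μ E ≠ 0 := by rw [hpE]; simp [hp0]
  have : IsProbabilityMeasure (μ[|E]) := cond_isProbabilityMeasure hE0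
  set P := (μ[|E]).bind κ with hP
  set Q := μ.bind κ with hQ
  have hPprob : IsProbabilityMeasure P := by
    constructor
    rw [hP, Measure.bind_apply MeasurableSet.univ κ.measurable.aemeasurable]
    simp
  have hQprob : IsProbabilityMeasure Q := by
    constructor
    rw [hQ, Measure.bind_apply MeasurableSet.univ κ.measurable.aemeasurable]
    simp
  have hcond : μ[|E] = (μ E)⁻¹ • μ.restrict E := rfl
  have hle : ∀ s : Set 𝒴, MeasurableSet s → P s ≤ (ENNReal.ofReal p)⁻¹ * Q s := by
    intro s hs
    rw [hP, hQ, Measure.bind_apply hs κ.measurable.aemeasurable,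
      Measure.bind_apply hs κ.measurable.aemeasurable, hcond]
    rw [lintegral_smul_measure, hpE]
    exact mul_le_mul_right (setLIntegral_le_lintegral _ _) _
  have hc_ne_top : (ENNReal.ofReal p)⁻¹ ≠ ⊤ := by
    simp [ENNReal.inv_ne_top, hp0]
  have hac : P ≪ Q := by
    refine Measure.AbsolutelyContinuous.mk fun s hs h0 => ?_
    have := hle s hs
    rw [h0, mul_zero] at this
    exact le_antisymm this (by simp)
  have hsmul_le : ENNReal.ofReal p • P ≤ Q := by
    intro s
    rcases exists_measurable_superset Q s with ⟨t, hst, ht, hQt⟩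
    calc (ENNReal.ofReal p • P) s ≤ (ENNReal.ofReal p • P) t := by
          exact measure_mono hst
      _ = ENNReal.ofReal p * P t := rfl
      _ ≤ ENNReal.ofReal p * ((ENNReal.ofReal p)⁻¹ * Q t) :=
          mul_le_mul_right (hle t ht) _
      _ = Q t := by
          rw [← mul_assoc, ENNReal.mul_inv_cancel (by simp [hp0]) (by simp), one_mul]
      _ = Q s := hQt
  have hr_le : P.rnDeriv Q ≤ᵐ[Q] fun _ => (ENNReal.ofReal p)⁻¹ := by
    have h1 : (ENNReal.ofReal p • P).rnDeriv Q ≤ᵐ[Q] 1 :=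
      Measure.rnDeriv_le_one_of_le hsmul_le
    have h2 : (ENNReal.ofReal p • P).rnDeriv Q =ᵐ[Q] ENNReal.ofReal p • P.rnDeriv Q :=
      Measure.rnDeriv_smul_left_of_ne_top P Q (by simp)
    filter_upwards [h1, h2] with y hy1 hy2
    rw [hy2] at hy1
    simp only [Pi.smul_apply, smul_eq_mul, Pi.one_apply] at hy1
    calc P.rnDeriv Q y = (ENNReal.ofReal p)⁻¹ * (ENNReal.ofReal p * P.rnDeriv Q y) := by
          rw [← mul_assoc, ENNReal.inv_mul_cancel (by simp [hp0]) (by simp), one_mul]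
      _ ≤ (ENNReal.ofReal p)⁻¹ * 1 := mul_le_mul_right hy1 _
      _ = (ENNReal.ofReal p)⁻¹ := mul_one _
  have hr_int : Integrable (fun y => (P.rnDeriv Q y).toReal) Q :=
    Measure.integrable_toReal_rnDeriv
  have hr_eq : ∫ y, (P.rnDeriv Q y).toReal ∂Q = 1 := by
    rw [Measure.integral_toReal_rnDeriv hac]
    simp
  have hr_mem : ∀ᵐ y ∂Q, (P.rnDeriv Q y).toReal ∈ Icc (0:ℝ) p⁻¹ := by
    filter_upwards [hr_le] with y hy
    refine ⟨ENNReal.toReal_nonneg, ?_⟩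
    have := ENNReal.toReal_mono hc_ne_top hy
    rwa [ENNReal.toReal_inv, ENNReal.toReal_ofReal hp0.le] at this
  -- integrability of fJS ∘ rnDeriv
  obtain ⟨C, hC⟩ := (isCompact_Icc (a := (0:ℝ)) (b := p⁻¹)).exists_bound_of_continuousOn
    continuous_fJS.continuousOn
  have hmeas : AEStronglyMeasurable (fun y => fJS ((P.rnDeriv Q y).toReal)) Q :=
    (continuous_fJS.measurable.comp
      (Measure.measurable_rnDeriv P Q).ennreal_toReal).aestronglyMeasurable
  have hint1 : Integrable (fun y => fJS ((P.rnDeriv Q y).toReal)) Q := by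
    refine Integrable.mono' (integrable_const C) hmeas ?_
    filter_upwards [hr_mem] with y hy
    exact hC _ hy
  have hint2 : Integrable
      (fun y => fJS 0 + (p * (fJS p⁻¹ - fJS 0)) * (P.rnDeriv Q y).toReal) Q :=
    (integrable_const (fJS 0)).add (hr_int.const_mul _)
  have hle_ae : ∀ᵐ y ∂Q, fJS ((P.rnDeriv Q y).toReal)
      ≤ fJS 0 + (p * (fJS p⁻¹ - fJS 0)) * (P.rnDeriv Q y).toReal := by
    filter_upwards [hr_mem] with y hy
    exact fJS_chord hp0 hy
  calc jsDivergence P Q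
      ≤ ∫ y, (fJS 0 + (p * (fJS p⁻¹ - fJS 0)) * (P.rnDeriv Q y).toReal) ∂Q :=
        integral_mono_ae hint1 hint2 hle_ae
    _ = fJS 0 + (p * (fJS p⁻¹ - fJS 0)) * ∫ y, (P.rnDeriv Q y).toReal ∂Q := by
        rw [integral_add (integrable_const _) (hr_int.const_mul _), integral_const,
          integral_const_mul]
        simp
    _ = (1 - p) * fJS 0 + p * fJS p⁻¹ := by rw [hr_eq]; ring
    _ = (1 / 2 : ℝ) * Real.log (4 * p ^ p / (1 + p) ^ (1 + p)) := key_algebra hp0 hp1
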